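/- Let G be obtained from a connected bipartite graph with bipartition U ∪ W by attaching at least one pendant vertex to each u ∈ U and any number of pendant triangles to each w ∈ W. Then IS(G) = IM(G) if and only if exactly one pendant vertex is attached to each u ∈ U and at least one pendant triangle is attached to each w ∈ W. -/

import Mathlib

variable {V : Type*}

/-- `M` is a matching in `G`: a finite set of edges of `G` that are pairwise non-incident. -/
def IsMatchingSet (G : SimpleGraph V) (M : Finset (Sym2 V)) : Prop :=
  (∀ e ∈ M, e ∈ G.edgeSet) ∧
  ∀ e ∈ M, ∀ f ∈ M, e ≠ f → ∀ v : V, v ∈ e → v ∉ f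

/-- `M` is an induced matching in `G`: a matching such that no edge of `G`
joins two distinct edges of `M`. -/
def IsInducedMatchingSet (G : SimpleGraph V) (M : Finset (Sym2 V)) : Prop :=
  IsMatchingSet G M ∧
  ∀ e ∈ M, ∀ f ∈ M, e ≠ f → ∀ a ∈ e, ∀ b ∈ f, ¬ G.Adj a b

/-- `S` is an independent set in `G`. -/
def IsIndepFinset (G : SimpleGraph V) (S : Finset V) : Prop :=
  ∀ a ∈ S, ∀ b ∈ S, ¬ G.Adj a b

/-- Maximum matching size `MM(G)`. -/
noncomputable def MMn (G : SimpleGraph V) : ℕ :=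
  sSup {n | ∃ M : Finset (Sym2 V), IsMatchingSet G M ∧ M.card = n}

/-- Maximum induced matching size `IM(G)`. -/
noncomputable def IMn (G : SimpleGraph V) : ℕ :=
  sSup {n | ∃ M : Finset (Sym2 V), IsInducedMatchingSet G M ∧ M.card = n}

/-- Maximum independent set size `IS(G)`. -/
noncomputable def ISn (G : SimpleGraph V) : ℕ :=
  sSup {n | ∃ S : Finset V, IsIndepFinset G S ∧ S.card = n}

/-- Vertex type of the Cameron–Walker construction: the original vertices,
the pendant vertices (`nP x` of them attached to `x`), and the pendant-triangle
vertices (`2 · nT x` of them attached to `x`, in pairs indexed by `ℕ × Bool`). -/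
def AugV (V' : Type*) (nP nT : V' → ℕ) : Type _ :=
  V' ⊕ ({p : V' × ℕ // p.2 < nP p.1} ⊕ {q : V' × ℕ × Bool // q.2.1 < nT q.1})

/-- Base adjacency relation of the Cameron–Walker construction. -/
def AugAdj {V' : Type*} (G' : SimpleGraph V') (nP nT : V' → ℕ) :
    AugV V' nP nT → AugV V' nP nT → Prop
  | Sum.inl a, Sum.inl b => G'.Adj a b
  | Sum.inl a, Sum.inr (Sum.inl p) => p.1.1 = a
  | Sum.inl a, Sum.inr (Sum.inr q) => q.1.1 = a
  | Sum.inr (Sum.inr q), Sum.inr (Sum.inr q') => q.1.1 = q'.1.1 ∧ q.1.2.1 = q'.1.2.1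
  | _, _ => False

/-- The graph obtained from `G'` by attaching `nP x` pendant vertices and
`nT x` pendant triangles to each vertex `x`. -/
def AugGraph {V' : Type*} (G' : SimpleGraph V') (nP nT : V' → ℕ) :
    SimpleGraph (AugV V' nP nT) :=
  SimpleGraph.fromRel (AugAdj G' nP nT)

/-!
Both invariants are computed exactly. The vertices of `G` split into cliques indexed by the
pendant vertices, the pendant triangles and the vertices of `W` carrying no triangle: each
`u ∈ U` joins one of its pendant vertices and each `w ∈ W` with a triangle joins one of them. An
independent set meets each clique at most once, and all pendant vertices together with one base
vertex of every triangle and the triangle-free vertices of `W` attain this bound, so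
`IS(G) = Σ n_u + Σ n_w + #{w ∈ W | n_w = 0}`.
Every edge either contains a vertex of `U` or lies in a pendant triangle together with its apex;
the edges through one vertex, as well as the edges of one triangle, pairwise meet, so a matching
has at most `|U| + Σ n_w` edges. The edges joining each `u` to one of its pendant vertices and
the bases of all triangles form an induced matching of that size, so `IM(G) = |U| + Σ n_w`.
Since `Σ n_u ≥ |U|`, the two agree iff every `n_u = 1` and no `n_w` vanishes.
-/

section CardinalityBounds

variable {ι : Type*} [Fintype ι] {G : SimpleGraph V}

lemma IsIndepFinset.card_le_of_isClique_fiber {S : Finset V} (hS : IsIndepFinset G S) (f : V → ι)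
    (hf : ∀ i, G.IsClique {a | f a = i}) : S.card ≤ Fintype.card ι := by
  rw [← Finset.card_univ]
  exact Finset.card_le_card_of_injOn f (fun _ _ => Finset.mem_coe.2 (Finset.mem_univ _))
    fun a ha b hb hab => by_contra fun hne => hS a ha b hb (hf (f b) hab rfl hne)

lemma IsMatchingSet.card_le_of_labelling {M : Finset (Sym2 V)} (hM : IsMatchingSet G M)
    (R : Sym2 V → ι → Prop) (hR : ∀ e ∈ G.edgeSet, ∃ k, R e k)
    (hmeet : ∀ e ∈ G.edgeSet, ∀ f ∈ G.edgeSet, ∀ k, R e k → R f k → ∃ v ∈ e, v ∈ f) :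
    M.card ≤ Fintype.card ι := by
  rw [← Finset.card_univ]
  refine Finset.card_le_card_of_forall_subsingleton R
    (fun e he => (hR e (hM.1 e he)).imp fun _ hk => ⟨Finset.mem_univ _, hk⟩) ?_
  rintro k - e ⟨he, hek⟩ f ⟨hf, hfk⟩
  by_contra hne
  obtain ⟨v, hve, hvf⟩ := hmeet e (hM.1 e he) f (hM.1 f hf) k hek hfk
  exact hM.2 e he f hf hne v hve hvf

end CardinalityBounds

open Sum

section Slots

variable {V' : Type*}

-- `Slot nP` indexes the pendant vertices of `AugV V' nP nT` and `Slot nT` its pendant triangles.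
abbrev Slot (n : V' → ℕ) : Type _ := {p : V' × ℕ // p.2 < n p.1}

abbrev TriangleVertex (n : V' → ℕ) : Type _ := {q : V' × ℕ × Bool // q.2.1 < n q.1}

def Slot.equivSigma (n : V' → ℕ) : Slot n ≃ Σ x : V', Fin (n x) where
  toFun p := ⟨p.1.1, p.1.2, p.2⟩
  invFun s := ⟨(s.1, s.2), s.2.2⟩
  left_inv _ := rfl
  right_inv _ := rfl

lemma Slot.fst_mem {n : V' → ℕ} {s : Finset V'} (hn : ∀ x ∉ s, n x = 0)
    (p : Slot n) : p.1.1 ∈ s :=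
  by_contra fun hp => Nat.not_lt_zero _ (hn _ hp ▸ p.2)

variable [Fintype V']

instance (n : V' → ℕ) : Fintype (Slot n) := Fintype.ofEquiv _ (Slot.equivSigma n).symm

lemma Slot.card_eq_sum {n : V' → ℕ} {s : Finset V'} (hn : ∀ x ∉ s, n x = 0) :
    Fintype.card (Slot n) = ∑ x ∈ s, n x := by
  rw [Fintype.card_congr (Slot.equivSigma n), Fintype.card_sigma,
    Finset.sum_subset (Finset.subset_univ s) fun x _ hx => hn x hx]
  simp

end Slots

namespace AugGraph

variable {V' : Type*} {G' : SimpleGraph V'} {nP nT : V' → ℕ}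

lemma adj_iff {x y : AugV V' nP nT} :
    (AugGraph G' nP nT).Adj x y ↔ x ≠ y ∧ (AugAdj G' nP nT x y ∨ AugAdj G' nP nT y x) :=
  SimpleGraph.fromRel_adj _ _ _

lemma adj_inl_inl {a b : V'} :
    (AugGraph G' nP nT).Adj (inl a) (inl b) ↔ G'.Adj a b := by
  refine adj_iff.trans ?_
  simp only [AugAdj]
  exact ⟨fun ⟨_, h⟩ => h.elim id G'.adj_symm, fun h => ⟨fun he => h.ne (inl_injective he), .inl h⟩⟩

lemma adj_inl_pend {a : V'} {p : Slot nP} :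
    (AugGraph G' nP nT).Adj (inl a) (inr (inl p)) ↔ p.1.1 = a := by
  refine adj_iff.trans ?_
  simp only [AugAdj, or_false]
  exact and_iff_right inl_ne_inr

lemma adj_inl_tri {a : V'} {q : TriangleVertex nT} :
    (AugGraph G' nP nT).Adj (inl a) (inr (inr q)) ↔ q.1.1 = a := by
  refine adj_iff.trans ?_
  simp only [AugAdj, or_false]
  exact and_iff_right inl_ne_inr

lemma not_adj_pend_pend {p p' : Slot nP} :
    ¬ (AugGraph G' nP nT).Adj (inr (inl p)) (inr (inl p')) := by
  refine fun h => ?_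
  simpa [AugAdj] using adj_iff.mp h

lemma not_adj_pend_tri {p : Slot nP} {q : TriangleVertex nT} :
    ¬ (AugGraph G' nP nT).Adj (inr (inl p)) (inr (inr q)) := by
  refine fun h => ?_
  simpa [AugAdj] using adj_iff.mp h

lemma adj_tri_tri {q q' : TriangleVertex nT} :
    (AugGraph G' nP nT).Adj (inr (inr q)) (inr (inr q')) ↔
      q ≠ q' ∧ q.1.1 = q'.1.1 ∧ q.1.2.1 = q'.1.2.1 := by
  refine adj_iff.trans ?_
  simp only [AugAdj]
  exact ⟨fun ⟨hne, h⟩ => ⟨fun he => hne (by rw [he]), h.elim id fun h => ⟨h.1.symm, h.2.symm⟩⟩,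
    fun ⟨hne, h⟩ => ⟨fun he => hne (inr_injective (inr_injective he)), .inl h⟩⟩

end AugGraph

section Independence

variable {V' : Type*} {G' : SimpleGraph V'} {U W : Finset V'} {nP nT : V' → ℕ}

def AugV.anchor : AugV V' nP nT → V'
  | inl x => x
  | inr (inl p) => p.1.1
  | inr (inr q) => q.1.1

abbrev IndepIndex (W : Finset V') (nP nT : V' → ℕ) : Type _ :=
  Slot nP ⊕ (Slot nT ⊕ {w : V' // w ∈ W ∧ nT w = 0})

def IndepIndex.anchor : IndepIndex W nP nT → V'
  | inl p => p.1.1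
  | inr (inl t) => t.1.1
  | inr (inr w) => w.1

def indepRep : IndepIndex W nP nT → AugV V' nP nT
  | inl p => inr (inl p)
  | inr (inl t) => inr (inr ⟨(t.1.1, t.1.2, true), t.2⟩)
  | inr (inr w) => inl w.1

lemma indepRep_not_adj (hdisj : ∀ x : V', ¬(x ∈ U ∧ x ∈ W))
    (hbip : ∀ a b : V', G'.Adj a b → (a ∈ U ∧ b ∈ W) ∨ (a ∈ W ∧ b ∈ U))
    (hnP0 : ∀ x ∉ U, nP x = 0) (j j' : IndepIndex W nP nT) :
    ¬ (AugGraph G' nP nT).Adj (indepRep j) (indepRep j') := by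
  have pend_ne : ∀ (p : Slot nP) (w : {w : V' // w ∈ W ∧ nT w = 0}), p.1.1 ≠ w.1 :=
    fun p w h => hdisj _ ⟨h ▸ Slot.fst_mem hnP0 p, w.2.1⟩
  have tri_ne : ∀ (t : Slot nT) (w : {w : V' // w ∈ W ∧ nT w = 0}), t.1.1 ≠ w.1 :=
    fun t w h => Nat.not_lt_zero _ (w.2.2 ▸ h ▸ t.2)
  rcases j with p | t | w <;> rcases j' with p' | t' | w' <;> simp only [indepRep]
  · exact AugGraph.not_adj_pend_pend
  · exact AugGraph.not_adj_pend_tri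
  · exact fun h => pend_ne p w' (AugGraph.adj_inl_pend.1 h.symm)
  · exact fun h => AugGraph.not_adj_pend_tri h.symm
  · intro h
    obtain ⟨hne, hfst, hsnd⟩ := AugGraph.adj_tri_tri.1 h
    exact hne (Subtype.ext (Prod.ext hfst (Prod.ext hsnd rfl)))
  · exact fun h => tri_ne t w' (AugGraph.adj_inl_tri.1 h.symm)
  · exact fun h => pend_ne p' w (AugGraph.adj_inl_pend.1 h)
  · exact fun h => tri_ne t' w (AugGraph.adj_inl_tri.1 h)
  · intro h
    rcases hbip _ _ (AugGraph.adj_inl_inl.1 h) with ⟨hu, -⟩ | ⟨-, hu⟩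
    · exact hdisj _ ⟨hu, w.2.1⟩
    · exact hdisj _ ⟨hu, w'.2.1⟩

variable [DecidableEq V']

def indepBlock (hpart : ∀ x : V', x ∈ U ∨ x ∈ W) (hnP : ∀ u ∈ U, 1 ≤ nP u) :
    AugV V' nP nT → IndepIndex W nP nT
  | inl x =>
      if hx : x ∈ U then inl ⟨(x, 0), hnP x hx⟩
      else if h0 : nT x = 0 then inr (inr ⟨x, (hpart x).resolve_left hx, h0⟩)
      else inr (inl ⟨(x, 0), Nat.pos_of_ne_zero h0⟩)
  | inr (inl p) => inl p
  | inr (inr q) => inr (inl ⟨(q.1.1, q.1.2.1), q.2⟩)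

lemma anchor_indepBlock (hpart : ∀ x : V', x ∈ U ∨ x ∈ W) (hnP : ∀ u ∈ U, 1 ≤ nP u)
    (a : AugV V' nP nT) : (indepBlock hpart hnP a).anchor = a.anchor := by
  rcases a with x | p | q
  · simp only [indepBlock]
    split_ifs <;> rfl
  · rfl
  · rfl

lemma indepBlock_indepRep (hpart : ∀ x : V', x ∈ U ∨ x ∈ W) (hdisj : ∀ x : V', ¬(x ∈ U ∧ x ∈ W))
    (hnP : ∀ u ∈ U, 1 ≤ nP u) (j : IndepIndex W nP nT) :
    indepBlock hpart hnP (indepRep j) = j := by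
  rcases j with p | t | ⟨w, hw, h0⟩
  · rfl
  · rfl
  · have hwU : w ∉ U := fun hu => hdisj w ⟨hu, hw⟩
    simp [indepRep, indepBlock, hwU, h0]

lemma isClique_indepBlock_fiber (hpart : ∀ x : V', x ∈ U ∨ x ∈ W) (hnP : ∀ u ∈ U, 1 ≤ nP u)
    (j : IndepIndex W nP nT) : (AugGraph G' nP nT).IsClique {a | indepBlock hpart hnP a = j} := by
  intro a (ha : _ = j) b (hb : _ = j) hne
  have hab : indepBlock hpart hnP a = indepBlock hpart hnP b := ha.trans hb.symm
  have hanchor : a.anchor = b.anchor := by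
    rw [← anchor_indepBlock hpart hnP, hab, anchor_indepBlock]
  rcases a with x | p | q <;> rcases b with y | p' | q' <;> simp only [indepBlock] at hab
  · exact absurd (congrArg inl hanchor) hne
  · exact AugGraph.adj_inl_pend.2 hanchor.symm
  · exact AugGraph.adj_inl_tri.2 hanchor.symm
  · exact (AugGraph.adj_inl_pend.2 hanchor).symm
  · exact absurd (congrArg (inr ∘ inl) (inl_injective hab)) hne
  · exact absurd hab inl_ne_inr
  · exact (AugGraph.adj_inl_tri.2 hanchor).symm
  · exact absurd hab inr_ne_inl
  · obtain ⟨hfst, hsnd⟩ := Prod.mk.inj (Subtype.ext_iff.1 (inl_injective (inr_injective hab)))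
    exact AugGraph.adj_tri_tri.2 ⟨fun h => hne (congrArg (inr ∘ inr) h), hfst, hsnd⟩

end Independence

section Matching

variable {V' : Type*} {G' : SimpleGraph V'} {U W : Finset V'} {nP nT : V' → ℕ}

abbrev MatchingIndex (U : Finset V') (nT : V' → ℕ) : Type _ := {u : V' // u ∈ U} ⊕ Slot nT

def MatchingIndex.key : MatchingIndex U nT → V' ⊕ (V' × ℕ)
  | inl u => inl u.1
  | inr t => inr t.1

def AugV.key : AugV V' nP nT → V' ⊕ (V' × ℕ)
  | inl x => inl x
  | inr (inl p) => inl p.1.1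
  | inr (inr q) => inr (q.1.1, q.1.2.1)

lemma MatchingIndex.key_injective : Function.Injective (MatchingIndex.key (U := U) (nT := nT)) := by
  rintro (u | t) (u' | t') h <;>
    simp only [MatchingIndex.key, inl.injEq, inr.injEq, reduceCtorEq] at h
  · exact congrArg inl (Subtype.ext h)
  · exact congrArg inr (Subtype.ext h)

def triangleCorner (t : Slot nT) : Option Bool → AugV V' nP nT
  | none => inl t.1.1
  | some b => inr (inr ⟨(t.1.1, t.1.2, b), t.2⟩)

def matchingEdge (hnP : ∀ u ∈ U, 1 ≤ nP u) : MatchingIndex U nT → Sym2 (AugV V' nP nT)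
  | inl u => s(inl u.1, inr (inl ⟨(u.1, 0), hnP u.1 u.2⟩))
  | inr t => s(triangleCorner t (some false), triangleCorner t (some true))

variable {hnP : ∀ u ∈ U, 1 ≤ nP u}

lemma matchingEdge_mem_edgeSet (k : MatchingIndex U nT) :
    matchingEdge hnP k ∈ (AugGraph G' nP nT).edgeSet := by
  rcases k with u | t
  · exact AugGraph.adj_inl_pend.2 rfl
  · refine AugGraph.adj_tri_tri.2 ⟨fun h => ?_, rfl, rfl⟩
    exact Bool.false_ne_true (congrArg (fun q : TriangleVertex nT => q.1.2.2) h)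

lemma key_of_mem_matchingEdge {k : MatchingIndex U nT} {v : AugV V' nP nT}
    (hv : v ∈ matchingEdge hnP k) : v.key = k.key := by
  rcases k with u | t <;> rcases Sym2.mem_iff.1 hv with rfl | rfl <;> rfl

lemma eq_of_key_eq_of_mem_matchingEdge {k k' : MatchingIndex U nT} {a b : AugV V' nP nT}
    (ha : a ∈ matchingEdge hnP k) (hb : b ∈ matchingEdge hnP k') (hab : a.key = b.key) :
    k = k' :=
  MatchingIndex.key_injective <| by
    rw [← key_of_mem_matchingEdge ha, ← key_of_mem_matchingEdge hb, hab]

lemma matchingEdge_injective : Function.Injective (matchingEdge hnP : MatchingIndex U nT → _) :=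
  fun k _ h => eq_of_key_eq_of_mem_matchingEdge (matchingEdge hnP k).out_fst_mem
    (h ▸ (matchingEdge hnP k).out_fst_mem) rfl

lemma key_eq_of_adj_of_mem_matchingEdge (hdisj : ∀ x : V', ¬(x ∈ U ∧ x ∈ W))
    (hbip : ∀ a b : V', G'.Adj a b → (a ∈ U ∧ b ∈ W) ∨ (a ∈ W ∧ b ∈ U))
    (hnT0 : ∀ x ∉ W, nT x = 0) {k k' : MatchingIndex U nT} {a b : AugV V' nP nT}
    (ha : a ∈ matchingEdge hnP k) (hb : b ∈ matchingEdge hnP k')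
    (hadj : (AugGraph G' nP nT).Adj a b) : a.key = b.key := by
  have not_adj_U : ∀ u u' : {u : V' // u ∈ U}, ¬ G'.Adj u u' := fun u u' h =>
    (hbip _ _ h).elim (fun h => hdisj _ ⟨u'.2, h.2⟩) (fun h => hdisj _ ⟨u.2, h.1⟩)
  have corner_ne : ∀ (u : {u : V' // u ∈ U}) (t : Slot nT), t.1.1 ≠ u.1 :=
    fun u t h => hdisj _ ⟨u.2, h ▸ Slot.fst_mem hnT0 t⟩
  rcases k with u | t <;> rcases k' with u' | t' <;>
    rcases Sym2.mem_iff.1 ha with rfl | rfl <;> rcases Sym2.mem_iff.1 hb with rfl | rfl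
  · exact (not_adj_U u u' (AugGraph.adj_inl_inl.1 hadj)).elim
  · exact congrArg inl (AugGraph.adj_inl_pend.1 hadj).symm
  · exact congrArg inl (AugGraph.adj_inl_pend.1 hadj.symm)
  · exact (AugGraph.not_adj_pend_pend hadj).elim
  · exact (corner_ne u t' (AugGraph.adj_inl_tri.1 hadj)).elim
  · exact (corner_ne u t' (AugGraph.adj_inl_tri.1 hadj)).elim
  · exact (AugGraph.not_adj_pend_tri hadj).elim
  · exact (AugGraph.not_adj_pend_tri hadj).elim
  · exact (corner_ne u' t (AugGraph.adj_inl_tri.1 hadj.symm)).elim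
  · exact (AugGraph.not_adj_pend_tri hadj.symm).elim
  · exact (corner_ne u' t (AugGraph.adj_inl_tri.1 hadj.symm)).elim
  · exact (AugGraph.not_adj_pend_tri hadj.symm).elim
  all_goals
    obtain ⟨-, hfst, hsnd⟩ := AugGraph.adj_tri_tri.1 hadj
    exact congrArg inr (Prod.ext hfst hsnd)

def MatchingIndex.Covers (e : Sym2 (AugV V' nP nT)) : MatchingIndex U nT → Prop
  | inl u => inl u.1 ∈ e
  | inr t => ∃ a b, e = s(triangleCorner t a, triangleCorner t b)

lemma MatchingIndex.exists_covers
    (hbip : ∀ a b : V', G'.Adj a b → (a ∈ U ∧ b ∈ W) ∨ (a ∈ W ∧ b ∈ U))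
    (hnP0 : ∀ x ∉ U, nP x = 0) {e : Sym2 (AugV V' nP nT)} (he : e ∈ (AugGraph G' nP nT).edgeSet) :
    ∃ k : MatchingIndex U nT, MatchingIndex.Covers e k := by
  induction e using Sym2.ind with | _ a b => ?_
  rw [SimpleGraph.mem_edgeSet] at he
  rcases a with x | p | q <;> rcases b with y | p' | q'
  · rcases hbip _ _ (AugGraph.adj_inl_inl.1 he) with ⟨hx, -⟩ | ⟨-, hy⟩
    · exact ⟨inl ⟨x, hx⟩, Sym2.mem_mk_left _ _⟩
    · exact ⟨inl ⟨y, hy⟩, Sym2.mem_mk_right _ _⟩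
  · obtain rfl := AugGraph.adj_inl_pend.1 he
    exact ⟨inl ⟨_, Slot.fst_mem hnP0 p'⟩, Sym2.mem_mk_left _ _⟩
  · obtain rfl := AugGraph.adj_inl_tri.1 he
    exact ⟨inr ⟨(q'.1.1, q'.1.2.1), q'.2⟩, none, some q'.1.2.2, rfl⟩
  · obtain rfl := AugGraph.adj_inl_pend.1 he.symm
    exact ⟨inl ⟨_, Slot.fst_mem hnP0 p⟩, Sym2.mem_mk_right _ _⟩
  · exact (AugGraph.not_adj_pend_pend he).elim
  · exact (AugGraph.not_adj_pend_tri he).elim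
  · obtain rfl := AugGraph.adj_inl_tri.1 he.symm
    exact ⟨inr ⟨(q.1.1, q.1.2.1), q.2⟩, some q.1.2.2, none, rfl⟩
  · exact (AugGraph.not_adj_pend_tri he.symm).elim
  · obtain ⟨⟨x, i, b⟩, hq⟩ := q
    obtain ⟨⟨x', i', b'⟩, hq'⟩ := q'
    obtain ⟨-, rfl, rfl⟩ := AugGraph.adj_tri_tri.1 he
    exact ⟨inr ⟨(x, i), hq⟩, some b, some b', rfl⟩

lemma MatchingIndex.exists_mem_of_covers {e f : Sym2 (AugV V' nP nT)}
    (he : e ∈ (AugGraph G' nP nT).edgeSet) (hf : f ∈ (AugGraph G' nP nT).edgeSet)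
    {k : MatchingIndex U nT} (hke : MatchingIndex.Covers e k) (hkf : MatchingIndex.Covers f k) :
    ∃ v ∈ e, v ∈ f := by
  rcases k with u | t
  · exact ⟨_, hke, hkf⟩
  · obtain ⟨a, b, rfl⟩ := hke
    obtain ⟨c, d, rfl⟩ := hkf
    have hab : a ≠ b := by rintro rfl; exact (AugGraph G' nP nT).irrefl he
    have hcd : c ≠ d := by rintro rfl; exact (AugGraph G' nP nT).irrefl hf
    -- any two 2-element subsets of the 3 corners of a triangle meet
    have : ∀ a b c d : Option Bool, a ≠ b → c ≠ d → a = c ∨ a = d ∨ b = c ∨ b = d := by decide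
    rcases this a b c d hab hcd with rfl | rfl | rfl | rfl <;> simp

lemma isInducedMatchingSet_map_matchingEdge [Fintype V'] (hdisj : ∀ x : V', ¬(x ∈ U ∧ x ∈ W))
    (hbip : ∀ a b : V', G'.Adj a b → (a ∈ U ∧ b ∈ W) ∨ (a ∈ W ∧ b ∈ U))
    (hnT0 : ∀ x ∉ W, nT x = 0) :
    IsInducedMatchingSet (AugGraph G' nP nT)
      (Finset.univ.map ⟨matchingEdge hnP, matchingEdge_injective⟩) := by
  simp only [IsInducedMatchingSet, IsMatchingSet, Finset.mem_map, Finset.mem_univ, true_and,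
    Function.Embedding.coeFn_mk]
  refine ⟨⟨?_, ?_⟩, ?_⟩
  · rintro _ ⟨k, rfl⟩
    exact matchingEdge_mem_edgeSet k
  · rintro _ ⟨k, rfl⟩ _ ⟨k', rfl⟩ hne v hv hv'
    exact hne (congrArg _ (eq_of_key_eq_of_mem_matchingEdge hv hv' rfl))
  · rintro _ ⟨k, rfl⟩ _ ⟨k', rfl⟩ hne a ha b hb hadj
    exact hne (congrArg _ (eq_of_key_eq_of_mem_matchingEdge ha hb
      (key_eq_of_adj_of_mem_matchingEdge hdisj hbip hnT0 ha hb hadj)))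

end Matching

section Invariants

variable {V' : Type*} [Fintype V'] {G' : SimpleGraph V'} {U W : Finset V'}
  {nP nT : V' → ℕ}

lemma ISn_augGraph [DecidableEq V'] (hpart : ∀ x : V', x ∈ U ∨ x ∈ W)
    (hdisj : ∀ x : V', ¬(x ∈ U ∧ x ∈ W))
    (hbip : ∀ a b : V', G'.Adj a b → (a ∈ U ∧ b ∈ W) ∨ (a ∈ W ∧ b ∈ U))
    (hnP : ∀ u ∈ U, 1 ≤ nP u) (hnP0 : ∀ x ∉ U, nP x = 0) :
    ISn (AugGraph G' nP nT) = Fintype.card (IndepIndex W nP nT) := by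
  have hrep : Function.Injective (indepRep : IndepIndex W nP nT → AugV V' nP nT) :=
    Function.LeftInverse.injective (indepBlock_indepRep (nT := nT) hpart hdisj hnP)
  refine IsGreatest.csSup_eq ⟨⟨Finset.univ.map ⟨indepRep, hrep⟩, ?_, by simp⟩, ?_⟩
  · simp only [IsIndepFinset, Finset.mem_map, Finset.mem_univ, true_and,
      Function.Embedding.coeFn_mk]
    rintro _ ⟨j, rfl⟩ _ ⟨j', rfl⟩
    exact indepRep_not_adj hdisj hbip hnP0 j j'
  · rintro n ⟨S, hS, rfl⟩
    exact hS.card_le_of_isClique_fiber (indepBlock hpart hnP) (isClique_indepBlock_fiber hpart hnP)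

lemma IMn_augGraph (hdisj : ∀ x : V', ¬(x ∈ U ∧ x ∈ W))
    (hbip : ∀ a b : V', G'.Adj a b → (a ∈ U ∧ b ∈ W) ∨ (a ∈ W ∧ b ∈ U))
    (hnP : ∀ u ∈ U, 1 ≤ nP u) (hnP0 : ∀ x ∉ U, nP x = 0) (hnT0 : ∀ x ∉ W, nT x = 0) :
    IMn (AugGraph G' nP nT) = Fintype.card (MatchingIndex U nT) := by
  refine IsGreatest.csSup_eq
    ⟨⟨_, isInducedMatchingSet_map_matchingEdge (hnP := hnP) hdisj hbip hnT0, by simp⟩, ?_⟩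
  rintro n ⟨M, hM, rfl⟩
  exact hM.1.card_le_of_labelling (fun e k => MatchingIndex.Covers e k)
    (fun _ => MatchingIndex.exists_covers hbip hnP0)
    (fun _ he _ hf _ => MatchingIndex.exists_mem_of_covers he hf)

end Invariants

theorem stmt_16_general {V' : Type*} [Fintype V'] [DecidableEq V'] (G' : SimpleGraph V')
    (U W : Finset V') (nP nT : V' → ℕ)
    (hpart : ∀ x : V', x ∈ U ∨ x ∈ W) (hdisj : ∀ x : V', ¬(x ∈ U ∧ x ∈ W))
    (hbip : ∀ a b : V', G'.Adj a b → (a ∈ U ∧ b ∈ W) ∨ (a ∈ W ∧ b ∈ U))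
    (hnP : ∀ u ∈ U, 1 ≤ nP u) (hnP0 : ∀ x ∉ U, nP x = 0)
    (hnT0 : ∀ x ∉ W, nT x = 0) :
    ISn (AugGraph G' nP nT) = IMn (AugGraph G' nP nT) ↔
      (∀ u ∈ U, nP u = 1) ∧ (∀ w ∈ W, 1 ≤ nT w) := by
  rw [ISn_augGraph hpart hdisj hbip hnP hnP0, IMn_augGraph hdisj hbip hnP hnP0 hnT0]
  simp only [Fintype.card_sum, Fintype.card_coe, Slot.card_eq_sum hnP0]
  have hsum : U.card ≤ ∑ u ∈ U, nP u := Finset.card_eq_sum_ones U ▸ Finset.sum_le_sum hnP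
  have hpend : ∑ u ∈ U, nP u = U.card ↔ ∀ u ∈ U, nP u = 1 := by
    rw [Finset.card_eq_sum_ones, eq_comm, Finset.sum_eq_sum_iff_of_le hnP]
    exact forall₂_congr fun _ _ => eq_comm
  have htri : Fintype.card {w : V' // w ∈ W ∧ nT w = 0} = 0 ↔ ∀ w ∈ W, 1 ≤ nT w := by
    simp [Fintype.card_eq_zero_iff, isEmpty_subtype, Nat.one_le_iff_ne_zero]
  rw [← hpend, ← htri]
  omega

theorem stmt_16 {V' : Type*} [Fintype V'] [DecidableEq V'] (G' : SimpleGraph V')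
    (U W : Finset V') (nP nT : V' → ℕ)
    (hpart : ∀ x : V', x ∈ U ∨ x ∈ W) (hdisj : ∀ x : V', ¬(x ∈ U ∧ x ∈ W))
    (hU : U.Nonempty) (hW : W.Nonempty)
    (hbip : ∀ a b : V', G'.Adj a b → (a ∈ U ∧ b ∈ W) ∨ (a ∈ W ∧ b ∈ U))
    (hconn : G'.Connected)
    (hnP : ∀ u ∈ U, 1 ≤ nP u) (hnP0 : ∀ x ∉ U, nP x = 0)
    (hnT0 : ∀ x ∉ W, nT x = 0) :
    ISn (AugGraph G' nP nT) = IMn (AugGraph G' nP nT) ↔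
      (∀ u ∈ U, nP u = 1) ∧ (∀ w ∈ W, 1 ≤ nT w) :=
  stmt_16_general G' U W nP nT hpart hdisj hbip hnP hnP0 hnT0
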